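/- arXiv:1401.0853 — 3 statements merged into one kernel-verified Lean document; each statement's English description precedes it below -/
import Mathlib

section
/- Let {X(t)}_{t≥0} be a fractional Brownian motion of Hurst parameter h ∈ (0,1) and let a(t) = ∫_t^{t+1} X(s) ds. Then with probability one, a'(t) = O(√(log t)) and X(t) − a(t) = O(√(log t)) as t → ∞. -/
/-!
Increments of fractional Brownian motion are centred Gaussians with variance `|t - s| ^ (2h)`,
hence sub-Gaussian. Give the `j`-th level-`k` dyadic increment of the window `[N, N + 2]`,
`X (N + (j + 1) / 2 ^ k) - X (N + j / 2 ^ k)`, the threshold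
`2 ^ (-k h) √(2 log (4 ^ (k + 1) (N + 1) ^ 2))`: it is exceeded with probability at most
`2 / (4 ^ (k + 1) (N + 1) ^ 2)`, which summed over the `2 ^ (k + 1)` increments of a level is
`2 ^ (-k) / (N + 1) ^ 2`, summable in `(N, k)`. By Borel–Cantelli, almost surely every increment
is at most a random constant `C` times its threshold. Chaining through the dyadic points and
continuity then give `|X s - X N| ≤ 2 C Σₖ (threshold at level k) = O(√(log N))` for
`s ∈ [N, N + 2]`, and both quantities of the theorem are controlled by this oscillation on
`[⌊t⌋, ⌊t⌋ + 2] ⊇ [t, t + 1]`.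
-/

open MeasureTheory Set Filter ProbabilityTheory

/-- Covariance function of fractional Brownian motion with Hurst parameter `h`. -/
noncomputable def fbmCov (h s t : ℝ) : ℝ :=
  (1 / 2) * (t ^ (2 * h) + s ^ (2 * h) - |t - s| ^ (2 * h))

open scoped ENNReal NNReal Topology
open Real

lemma ProbabilityTheory.HasSubgaussianMGF.of_map_eq_gaussianReal {Ω : Type*}
    [MeasurableSpace Ω] {μ : Measure Ω} {X : Ω → ℝ} {v : ℝ≥0} (hX : AEMeasurable X μ)
    (hmap : μ.map X = gaussianReal 0 v) : HasSubgaussianMGF X v μ := by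
  rw [← id_map_iff hX, hmap]
  exact ⟨integrable_exp_mul_gaussianReal, fun t => by simp [mgf_id_gaussianReal]⟩

lemma ProbabilityTheory.HasSubgaussianMGF.measure_abs_ge_le {Ω : Type*} [MeasurableSpace Ω]
    {μ : Measure Ω} [IsFiniteMeasure μ] {X : Ω → ℝ} {c : ℝ≥0} (hX : HasSubgaussianMGF X c μ)
    {ε : ℝ} (hε : 0 ≤ ε) :
    μ {ω | ε ≤ |X ω|} ≤ ENNReal.ofReal (2 * exp (-ε ^ 2 / (2 * c))) := by
  have hsplit : {ω | ε ≤ |X ω|} = {ω | ε ≤ X ω} ∪ {ω | ε ≤ (-X) ω} := by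
    ext ω; simp [le_abs, le_neg]
  calc μ {ω | ε ≤ |X ω|} ≤ μ {ω | ε ≤ X ω} + μ {ω | ε ≤ (-X) ω} :=
        hsplit ▸ measure_union_le _ _
    _ = ENNReal.ofReal (μ.real {ω | ε ≤ X ω} + μ.real {ω | ε ≤ (-X) ω}) := by
      rw [ENNReal.ofReal_add measureReal_nonneg measureReal_nonneg, ofReal_measureReal,
        ofReal_measureReal]
    _ ≤ ENNReal.ofReal (2 * exp (-ε ^ 2 / (2 * c))) := by
      gcongr
      linarith [hX.measure_ge_le hε, hX.neg.measure_ge_le hε]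

lemma map_sub_eq_gaussianReal_of_fbmCov {Ω : Type*} [MeasurableSpace Ω] (P : Measure Ω)
    {h : ℝ} (hh : 0 < h) {X : Ω → ℝ → ℝ}
    (hgauss : ∀ (n : ℕ) (t : Fin n → ℝ), (∀ i, 0 ≤ t i) → ∀ c : Fin n → ℝ,
      Measure.map (fun ω => ∑ i, c i * X ω (t i)) P =
        gaussianReal 0 (∑ i, ∑ j, c i * c j * fbmCov h (t i) (t j)).toNNReal)
    {s t : ℝ} (hs : 0 ≤ s) (ht : 0 ≤ t) :
    P.map (fun ω => X ω t - X ω s) = gaussianReal 0 (|t - s| ^ (2 * h)).toNNReal := by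
  have := hgauss 2 ![s, t] (by simp [Fin.forall_fin_two, hs, ht]) ![-1, 1]
  simp only [Fin.sum_univ_two, Matrix.cons_val_zero, Matrix.cons_val_one] at this
  convert this using 3
  · ring
  · simp only [fbmCov, sub_self, abs_zero, zero_rpow (by positivity : 2 * h ≠ 0),
      abs_sub_comm s t]
    ring

noncomputable def dyadicIncr (g : ℝ → ℝ) (a : ℝ) (k j : ℕ) : ℝ :=
  g (a + (j + 1) / 2 ^ k) - g (a + j / 2 ^ k)

section Chaining

variable {g : ℝ → ℝ} {a : ℝ} {x : ℕ → ℝ}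

lemma abs_sub_le_sum_of_abs_dyadicIncr_le (hx0 : ∀ k, 0 ≤ x k)
    (hincr : ∀ k j : ℕ, j < 2 ^ k → |dyadicIncr g a k j| ≤ x k) :
    ∀ K j : ℕ, j ≤ 2 ^ K → |g (a + j / 2 ^ K) - g a| ≤ ∑ k ∈ Finset.range (K + 1), x k := by
  intro K
  induction K with
  | zero =>
    intro j hj
    obtain rfl | rfl : j = 0 ∨ j = 1 := by omega
    · simpa using hx0 0
    · simpa [dyadicIncr] using hincr 0 0 one_pos
  | succ K ih =>
    intro j hj
    have hparent : g (a + (j / 2 : ℕ) / 2 ^ K) = g (a + (2 * (j / 2) : ℕ) / 2 ^ (K + 1)) := by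
      congr 2; push_cast; field_simp; ring
    have hstep : |g (a + j / 2 ^ (K + 1)) - g (a + (j / 2 : ℕ) / 2 ^ K)| ≤ x (K + 1) := by
      rw [hparent]
      rcases Nat.even_or_odd' j with ⟨i, rfl | rfl⟩
      · simpa using hx0 (K + 1)
      · have := hincr (K + 1) (2 * i) (by omega)
        simpa [dyadicIncr, Nat.mul_add_div] using this
    calc |g (a + j / 2 ^ (K + 1)) - g a|
        ≤ |g (a + j / 2 ^ (K + 1)) - g (a + (j / 2 : ℕ) / 2 ^ K)|
          + |g (a + (j / 2 : ℕ) / 2 ^ K) - g a| := abs_sub_le _ _ _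
      _ ≤ x (K + 1) + ∑ k ∈ Finset.range (K + 1), x k :=
          add_le_add hstep (ih _ (by rw [pow_succ] at hj; omega))
      _ = ∑ k ∈ Finset.range (K + 2), x k := by rw [Finset.sum_range_succ _ (K + 1), add_comm]

lemma abs_sub_le_tsum_of_abs_dyadicIncr_le (hg : ContinuousOn g (Icc a (a + 1)))
    (hx : Summable x) (hx0 : ∀ k, 0 ≤ x k)
    (hincr : ∀ k j : ℕ, j < 2 ^ k → |dyadicIncr g a k j| ≤ x k)
    {t : ℝ} (ht : t ∈ Icc a (a + 1)) : |g t - g a| ≤ ∑' k, x k := by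
  set u : ℕ → ℝ := fun K => a + (⌊(t - a) * 2 ^ K⌋₊ : ℝ) / 2 ^ K
  have hu : Tendsto u atTop (𝓝[Icc a (a + 1)] t) := by
    refine tendsto_nhdsWithin_iff.2 ⟨?_, Eventually.of_forall fun K => ⟨?_, ?_⟩⟩
    · simpa using (((tendsto_nat_floor_mul_div_atTop (sub_nonneg.2 ht.1)).comp
        (tendsto_pow_atTop_atTop_of_one_lt one_lt_two)).const_add a)
    · have : (0 : ℝ) ≤ (⌊(t - a) * 2 ^ K⌋₊ : ℝ) / 2 ^ K := by positivity
      linarith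
    · have : (⌊(t - a) * 2 ^ K⌋₊ : ℝ) / 2 ^ K ≤ t - a := by
        rw [div_le_iff₀ (by positivity)]
        exact Nat.floor_le (by have := sub_nonneg.2 ht.1; positivity)
      linarith [ht.2]
  refine le_of_tendsto ((((hg t ht).tendsto.comp hu).sub_const (g a)).abs)
    (Eventually.of_forall fun K => ?_)
  calc |g (u K) - g a| ≤ ∑ k ∈ Finset.range (K + 1), x k :=
        abs_sub_le_sum_of_abs_dyadicIncr_le hx0 hincr K _ (Nat.floor_le_of_le (by
          push_cast; nlinarith [ht.2, pow_pos (two_pos (α := ℝ)) K]))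
    _ ≤ ∑' k, x k := hx.sum_le_tsum _ fun k _ => hx0 k

lemma dyadicIncr_add_one (k j : ℕ) :
    dyadicIncr g (a + 1) k j = dyadicIncr g a k (2 ^ k + j) := by
  simp only [dyadicIncr]
  push_cast
  congr 2 <;> field_simp <;> ring

lemma abs_sub_le_two_mul_tsum_of_abs_dyadicIncr_le (hg : ContinuousOn g (Icc a (a + 2)))
    (hx : Summable x) (hx0 : ∀ k, 0 ≤ x k)
    (hincr : ∀ k j : ℕ, j < 2 ^ (k + 1) → |dyadicIncr g a k j| ≤ x k)
    {t : ℝ} (ht : t ∈ Icc a (a + 2)) : |g t - g a| ≤ 2 * ∑' k, x k := by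
  have hleft : ∀ s ∈ Icc a (a + 1), |g s - g a| ≤ ∑' k, x k :=
    fun s hs => abs_sub_le_tsum_of_abs_dyadicIncr_le
      (hg.mono (Icc_subset_Icc_right (by linarith))) hx hx0
      (fun k j hj => hincr k j (by rw [pow_succ]; omega)) hs
  have hsum0 : 0 ≤ ∑' k, x k := tsum_nonneg hx0
  rcases le_total t (a + 1) with hta | hta
  · linarith [hleft t ⟨ht.1, hta⟩]
  · have hright : |g t - g (a + 1)| ≤ ∑' k, x k := by
      refine abs_sub_le_tsum_of_abs_dyadicIncr_le
        (hg.mono (Icc_subset_Icc (by linarith) (by linarith))) hx hx0 (fun k j hj => ?_)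
        ⟨hta, by linarith [ht.2]⟩
      rw [dyadicIncr_add_one]
      exact hincr k _ (by rw [pow_succ]; omega)
    calc |g t - g a| ≤ |g t - g (a + 1)| + |g (a + 1) - g a| := abs_sub_le _ _ _
      _ ≤ 2 * ∑' k, x k := by linarith [hleft (a + 1) ⟨by linarith, le_rfl⟩]

end Chaining

lemma exists_forall_le_mul_of_finite {ι : Type*} {f g : ι → ℝ} (hg : ∀ i, 0 < g i)
    (hfin : {i | g i ≤ f i}.Finite) : ∃ C, 0 ≤ C ∧ ∀ i, f i ≤ C * g i := by
  obtain ⟨M, hM⟩ := (hfin.image fun i => f i / g i).bddAbove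
  refine ⟨max 1 M, zero_le_one.trans (le_max_left _ _), fun i => ?_⟩
  by_cases hi : g i ≤ f i
  · calc f i = f i / g i * g i := (div_mul_cancel₀ _ (hg i).ne').symm
      _ ≤ max 1 M * g i := by
        gcongr
        · exact (hg i).le
        · exact (hM ⟨i, hi, rfl⟩).trans (le_max_right _ _)
  · calc f i ≤ 1 * g i := by linarith
      _ ≤ max 1 M * g i := by gcongr; exact (hg i).le; exact le_max_left _ _

noncomputable def dyadicThreshold (r : ℝ) (N k : ℕ) : ℝ :=
  r ^ k * √(2 * log (4 ^ (k + 1) * (N + 1) ^ 2))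

section DyadicThreshold

variable {r : ℝ} (N k : ℕ)

lemma one_lt_four_pow_succ_mul_sq : 1 < (4 : ℝ) ^ (k + 1) * (N + 1) ^ 2 :=
  one_lt_mul_of_lt_of_le (one_lt_pow₀ (by norm_num) k.succ_ne_zero)
    (one_le_pow₀ (by linarith [N.cast_nonneg (α := ℝ)]))

lemma dyadicThreshold_pos (hr : 0 < r) : 0 < dyadicThreshold r N k := by
  have := log_pos (one_lt_four_pow_succ_mul_sq N k)
  unfold dyadicThreshold
  positivity

lemma exp_neg_sq_dyadicThreshold (hr : 0 < r) :
    exp (-dyadicThreshold r N k ^ 2 / (2 * (r ^ k) ^ 2)) =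
      ((4 : ℝ) ^ (k + 1) * (N + 1) ^ 2)⁻¹ := by
  have := log_pos (one_lt_four_pow_succ_mul_sq N k)
  rw [dyadicThreshold, mul_pow, sq_sqrt (by positivity)]
  rw [show -((r ^ k) ^ 2 * (2 * log ((4 : ℝ) ^ (k + 1) * (N + 1) ^ 2))) / (2 * (r ^ k) ^ 2)
    = -log ((4 : ℝ) ^ (k + 1) * (N + 1) ^ 2) by field_simp]
  rw [exp_neg, exp_log (by positivity)]

lemma dyadicThreshold_le (hr : 0 ≤ r) :
    dyadicThreshold r N k ≤ (k + 1) * r ^ k * √(2 * log (4 * (N + 1) ^ 2)) := by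
  have hN : (1 : ℝ) ≤ (N + 1) ^ 2 := one_le_pow₀ (by linarith [N.cast_nonneg (α := ℝ)])
  have hlog : log ((4 : ℝ) ^ (k + 1) * (N + 1) ^ 2) ≤ (k + 1) * log (4 * (N + 1) ^ 2) := by
    rw [show (k : ℝ) + 1 = (k + 1 : ℕ) by push_cast; ring, ← log_pow, mul_pow]
    gcongr
    exact le_self_pow₀ hN k.succ_ne_zero
  calc dyadicThreshold r N k ≤ r ^ k * √((k + 1) * (2 * log (4 * (N + 1) ^ 2))) := by
        unfold dyadicThreshold
        exact mul_le_mul_of_nonneg_left (sqrt_le_sqrt (by linarith)) (by positivity)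
    _ = r ^ k * (√(k + 1) * √(2 * log (4 * (N + 1) ^ 2))) := by rw [sqrt_mul (by positivity)]
    _ ≤ r ^ k * ((k + 1) * √(2 * log (4 * (N + 1) ^ 2))) := by
        gcongr
        exact (sqrt_le_left (by positivity)).2 (by nlinarith [k.cast_nonneg (α := ℝ)])
    _ = (k + 1) * r ^ k * √(2 * log (4 * (N + 1) ^ 2)) := by ring

lemma summable_succ_mul_geometric (hr0 : 0 ≤ r) (hr1 : r < 1) :
    Summable fun k : ℕ => (k + 1) * r ^ k := by
  have hnorm : ‖r‖ < 1 := by rwa [norm_of_nonneg hr0]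
  simpa [add_mul] using (summable_pow_mul_geometric_of_norm_lt_one 1 hnorm).add
    (summable_geometric_of_lt_one hr0 hr1)

lemma summable_dyadicThreshold (hr0 : 0 < r) (hr1 : r < 1) :
    Summable fun k => dyadicThreshold r N k :=
  ((summable_succ_mul_geometric hr0.le hr1).mul_right _).of_nonneg_of_le
    (fun k => (dyadicThreshold_pos N k hr0).le) (fun k => dyadicThreshold_le N k hr0.le)

lemma tsum_dyadicThreshold_le (hr0 : 0 < r) (hr1 : r < 1) :
    ∑' k, dyadicThreshold r N k ≤
      (∑' k : ℕ, (k + 1) * r ^ k) * √(2 * log (4 * (N + 1) ^ 2)) := by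
  rw [← tsum_mul_right]
  exact (summable_dyadicThreshold N hr0 hr1).tsum_le_tsum
    (fun k => dyadicThreshold_le N k hr0.le) ((summable_succ_mul_geometric hr0.le hr1).mul_right _)

end DyadicThreshold

-- An index `(N, ⟨k, j⟩)` is the `j`-th level-`k` dyadic increment of the window `[N, N + 2]`.
lemma tsum_ofReal_dyadic_ne_top :
    ∑' i : ℕ × (Σ k : ℕ, Fin (2 ^ (k + 1))),
      ENNReal.ofReal (2 * ((4 : ℝ) ^ (i.2.1 + 1) * (i.1 + 1) ^ 2)⁻¹) ≠ ∞ := by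
  have hlevel : ∀ (N k : ℕ), ∑' _ : Fin (2 ^ (k + 1)),
      ENNReal.ofReal (2 * ((4 : ℝ) ^ (k + 1) * (N + 1) ^ 2)⁻¹)
        = ENNReal.ofReal (((N : ℝ) + 1) ^ 2)⁻¹ * ENNReal.ofReal ((1 / 2) ^ k) := by
    intro N k
    rw [tsum_fintype, Finset.sum_const, Finset.card_univ, Fintype.card_fin, nsmul_eq_mul,
      ← ENNReal.ofReal_natCast, ← ENNReal.ofReal_mul (by positivity),
      ← ENNReal.ofReal_mul (by positivity)]
    congr 1
    push_cast
    rw [show (4 : ℝ) ^ (k + 1) = 2 ^ (k + 1) * 2 ^ (k + 1) by rw [← mul_pow]; norm_num,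
      one_div_pow]
    field_simp
    ring
  have hN : Summable fun N : ℕ => (((N : ℝ) + 1) ^ 2)⁻¹ := by
    simpa using (summable_nat_add_iff 1).2 (summable_nat_pow_inv.2 one_lt_two)
  have hk : Summable fun k : ℕ => ((1 : ℝ) / 2) ^ k :=
    summable_geometric_of_lt_one (by norm_num) (by norm_num)
  rw [ENNReal.tsum_prod']
  simp_rw [ENNReal.tsum_sigma', hlevel, ENNReal.tsum_mul_left, ENNReal.tsum_mul_right,
    ← ENNReal.ofReal_tsum_of_nonneg (fun _ => by positivity) hN,
    ← ENNReal.ofReal_tsum_of_nonneg (fun _ => by positivity) hk]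
  exact ENNReal.mul_ne_top ENNReal.ofReal_ne_top ENNReal.ofReal_ne_top

lemma abs_dyadic_step_rpow_eq (a h : ℝ) (k j : ℕ) :
    |(a + (j + 1) / 2 ^ k) - (a + j / 2 ^ k)| ^ (2 * h) = ((2 ^ h)⁻¹ ^ k) ^ 2 := by
  rw [show (a + (j + 1) / 2 ^ k) - (a + j / 2 ^ k) = ((2 : ℝ) ^ k)⁻¹ by field_simp; ring,
    abs_of_pos (by positivity), inv_rpow (by positivity), ← pow_mul, inv_pow,
    ← rpow_natCast 2 k, ← rpow_natCast (2 ^ h), ← rpow_mul zero_le_two, ← rpow_mul zero_le_two]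
  push_cast
  ring_nf

lemma ae_finite_setOf_dyadicThreshold_le {Ω : Type*} [MeasurableSpace Ω] {P : Measure Ω}
    [IsFiniteMeasure P] {X : Ω → ℝ → ℝ} {h : ℝ}
    (hsub : ∀ s t, 0 ≤ s → 0 ≤ t →
      HasSubgaussianMGF (fun ω => X ω t - X ω s) (|t - s| ^ (2 * h)).toNNReal P) :
    ∀ᵐ ω ∂P, {i : ℕ × (Σ k : ℕ, Fin (2 ^ (k + 1))) |
      dyadicThreshold (2 ^ h)⁻¹ i.1 i.2.1 ≤ |dyadicIncr (X ω) i.1 i.2.1 i.2.2|}.Finite := by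
  refine ae_finite_setOfPred_mem (ne_top_of_le_ne_top tsum_ofReal_dyadic_ne_top
    (ENNReal.tsum_le_tsum fun ⟨N, k, j⟩ => ?_))
  have hr : (0 : ℝ) < (2 ^ h)⁻¹ := by positivity
  have := (hsub (N + (j : ℕ) / 2 ^ k) (N + ((j : ℕ) + 1) / 2 ^ k) (by positivity)
    (by positivity)).measure_abs_ge_le (dyadicThreshold_pos N k hr).le
  rw [abs_dyadic_step_rpow_eq, Real.coe_toNNReal _ (by positivity),
    exp_neg_sq_dyadicThreshold N k hr] at this
  exact this

lemma exists_abs_sub_le_of_finite_setOf_dyadicThreshold_le {g : ℝ → ℝ}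
    (hg : ContinuousOn g (Ici 0)) {r : ℝ} (hr0 : 0 < r) (hr1 : r < 1)
    (hfin : {i : ℕ × (Σ k : ℕ, Fin (2 ^ (k + 1))) |
      dyadicThreshold r i.1 i.2.1 ≤ |dyadicIncr g i.1 i.2.1 i.2.2|}.Finite) :
    ∃ C, 0 ≤ C ∧ ∀ N : ℕ, ∀ s ∈ Icc (N : ℝ) (N + 2),
      |g s - g N| ≤ C * √(2 * log (4 * (N + 1) ^ 2)) := by
  obtain ⟨C, hC0, hC⟩ :=
    exists_forall_le_mul_of_finite (fun i : ℕ × (Σ k : ℕ, Fin (2 ^ (k + 1))) =>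
      dyadicThreshold_pos i.1 i.2.1 hr0) hfin
  set M := ∑' k : ℕ, (k + 1) * r ^ k
  have hM0 : 0 ≤ M := tsum_nonneg fun k => by positivity
  refine ⟨2 * C * M, by positivity, fun N s hs => ?_⟩
  have hwindow : Icc (N : ℝ) (N + 2) ⊆ Ici 0 := fun x hx => le_trans N.cast_nonneg hx.1
  calc |g s - g N| ≤ 2 * ∑' k, C * dyadicThreshold r N k :=
        abs_sub_le_two_mul_tsum_of_abs_dyadicIncr_le (hg.mono hwindow)
          ((summable_dyadicThreshold N hr0 hr1).mul_left C)
          (fun k => mul_nonneg hC0 (dyadicThreshold_pos N k hr0).le)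
          (fun k j hj => hC ⟨N, k, ⟨j, hj⟩⟩) hs
    _ = 2 * C * ∑' k, dyadicThreshold r N k := by rw [tsum_mul_left]; ring
    _ ≤ 2 * C * (M * √(2 * log (4 * (N + 1) ^ 2))) := by
        gcongr; exact tsum_dyadicThreshold_le N hr0 hr1
    _ = 2 * C * M * √(2 * log (4 * (N + 1) ^ 2)) := by ring

lemma sqrt_two_mul_log_floor_le {t : ℝ} (ht : 3 ≤ t) :
    √(2 * log (4 * ((⌊t⌋₊ : ℝ) + 1) ^ 2)) ≤ 3 * √(log t) := by
  have hfloor : (⌊t⌋₊ : ℝ) ≤ t := Nat.floor_le (by linarith)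
  have hpoly : 4 * ((⌊t⌋₊ : ℝ) + 1) ^ 2 ≤ t ^ 4 := by
    have h2 : 2 * (t + 1) ≤ t ^ 2 := by nlinarith
    calc 4 * ((⌊t⌋₊ : ℝ) + 1) ^ 2 ≤ 4 * (t + 1) ^ 2 := by gcongr
      _ ≤ t ^ 4 := by nlinarith
  have hlog : log (4 * ((⌊t⌋₊ : ℝ) + 1) ^ 2) ≤ 4 * log t := by
    calc log (4 * ((⌊t⌋₊ : ℝ) + 1) ^ 2) ≤ log (t ^ 4) := log_le_log (by positivity) hpoly
      _ = 4 * log t := by rw [log_pow]; norm_num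
  rw [sqrt_le_left (by positivity), mul_pow, sq_sqrt (log_nonneg (by linarith))]
  linarith [log_nonneg (by linarith : (1 : ℝ) ≤ t)]

section WindowBound

variable {g : ℝ → ℝ} {C : ℝ}

lemma abs_sub_le_of_window_bound (hC0 : 0 ≤ C)
    (hC : ∀ N : ℕ, ∀ s ∈ Icc (N : ℝ) (N + 2),
      |g s - g N| ≤ C * √(2 * log (4 * (N + 1) ^ 2)))
    {t s₁ s₂ : ℝ} (ht : 3 ≤ t) (hs₁ : s₁ ∈ Icc t (t + 1)) (hs₂ : s₂ ∈ Icc t (t + 1)) :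
    |g s₁ - g s₂| ≤ 6 * C * √(log t) := by
  have hwindow : Icc t (t + 1) ⊆ Icc (⌊t⌋₊ : ℝ) (⌊t⌋₊ + 2) := Icc_subset_Icc
    (Nat.floor_le (by linarith)) (by linarith [Nat.lt_floor_add_one t])
  have hscale := mul_le_mul_of_nonneg_left (sqrt_two_mul_log_floor_le ht) hC0
  calc |g s₁ - g s₂| ≤ |g s₁ - g ⌊t⌋₊| + |g ⌊t⌋₊ - g s₂| := abs_sub_le _ _ _
    _ ≤ 6 * C * √(log t) := by
      rw [abs_sub_comm (g _) (g s₂)]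
      linarith [hC _ s₁ (hwindow hs₁), hC _ s₂ (hwindow hs₂)]

lemma sqrt_log_bounds_of_window_bound (hg : ContinuousOn g (Ici 0)) (hC0 : 0 ≤ C)
    (hC : ∀ N : ℕ, ∀ s ∈ Icc (N : ℝ) (N + 2),
      |g s - g N| ≤ C * √(2 * log (4 * (N + 1) ^ 2))) :
    (∃ C T : ℝ, ∀ t ≥ T, |g (t + 1) - g t| ≤ C * √(log t)) ∧
      (∃ C T : ℝ, ∀ t ≥ T, |g t - ∫ s in t..(t + 1), g s| ≤ C * √(log t)) := by
  refine ⟨⟨6 * C, 3, fun t ht => abs_sub_le_of_window_bound hC0 hC ht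
    ⟨by linarith, le_rfl⟩ ⟨le_rfl, by linarith⟩⟩, ⟨6 * C, 3, fun t ht => ?_⟩⟩
  have hint : IntervalIntegrable g volume t (t + 1) :=
    (hg.mono fun s hs => by
      rw [uIcc_of_le (by linarith)] at hs; exact le_trans (by linarith) hs.1).intervalIntegrable
  calc |g t - ∫ s in t..(t + 1), g s| = ‖∫ s in t..(t + 1), (g t - g s)‖ := by
        rw [intervalIntegral.integral_sub intervalIntegrable_const hint,
          intervalIntegral.integral_const, Real.norm_eq_abs]
        norm_num
    _ ≤ 6 * C * √(log t) * |t + 1 - t| := by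
        refine intervalIntegral.norm_integral_le_of_norm_le_const fun s hs => ?_
        rw [uIoc_of_le (by linarith)] at hs
        exact abs_sub_le_of_window_bound hC0 hC ht ⟨le_rfl, by linarith⟩ ⟨hs.1.le, hs.2⟩
    _ = 6 * C * √(log t) := by norm_num

end WindowBound

theorem stmt6_general {Ω : Type*} [MeasurableSpace Ω] (P : Measure Ω) [IsProbabilityMeasure P]
    (h : ℝ) (hh : h ∈ Ioo (0:ℝ) 1) (X : Ω → ℝ → ℝ)
    (hmeas : ∀ t : ℝ, Measurable fun ω => X ω t)
    (hcont : ∀ ω : Ω, ContinuousOn (X ω) (Ici 0))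
    (hgauss : ∀ (n : ℕ) (t : Fin n → ℝ), (∀ i, 0 ≤ t i) → ∀ c : Fin n → ℝ,
      Measure.map (fun ω => ∑ i, c i * X ω (t i)) P =
        gaussianReal 0 (∑ i, ∑ j, c i * c j * fbmCov h (t i) (t j)).toNNReal) :
    ∀ᵐ ω ∂P,
      (∃ C T : ℝ, ∀ t ≥ T, |X ω (t + 1) - X ω t| ≤ C * Real.sqrt (Real.log t)) ∧
      (∃ C T : ℝ, ∀ t ≥ T,
        |X ω t - ∫ s in t..(t + 1), X ω s| ≤ C * Real.sqrt (Real.log t)) := by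
  have hr0 : (0 : ℝ) < (2 ^ h)⁻¹ := by positivity
  have hr1 : (2 ^ h : ℝ)⁻¹ < 1 := inv_lt_one_of_one_lt₀ (one_lt_rpow one_lt_two hh.1)
  have hsub : ∀ s t : ℝ, 0 ≤ s → 0 ≤ t →
      HasSubgaussianMGF (fun ω => X ω t - X ω s) (|t - s| ^ (2 * h)).toNNReal P :=
    fun s t hs ht => .of_map_eq_gaussianReal ((hmeas t).sub (hmeas s)).aemeasurable
      (map_sub_eq_gaussianReal_of_fbmCov P hh.1 hgauss hs ht)
  filter_upwards [ae_finite_setOf_dyadicThreshold_le hsub] with ω hω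
  obtain ⟨C, hC0, hC⟩ :=
    exists_abs_sub_le_of_finite_setOf_dyadicThreshold_le (hcont ω) hr0 hr1 hω
  exact sqrt_log_bounds_of_window_bound (hcont ω) hC0 hC

/-- If `X` is a fractional Brownian motion of Hurst parameter `h ∈ (0,1)`
(centered Gaussian process with continuous paths, `X(0) = 0`, covariance
`E[X(t)X(s)] = (1/2)(t^{2h}+s^{2h}−|t−s|^{2h})`) and `a(t) = ∫_t^{t+1} X(s) ds`, then
almost surely `a'(t) = X(t+1) − X(t) = O(√(log t))` and `X(t) − a(t) = O(√(log t))`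
as `t → ∞`. -/
theorem stmt6 {Ω : Type*} [MeasurableSpace Ω] (P : Measure Ω) [IsProbabilityMeasure P]
    (h : ℝ) (hh : h ∈ Ioo (0:ℝ) 1) (X : Ω → ℝ → ℝ)
    (hmeas : ∀ t : ℝ, Measurable fun ω => X ω t)
    (hcont : ∀ ω : Ω, ContinuousOn (X ω) (Ici 0))
    (hzero : ∀ ω : Ω, X ω 0 = 0)
    (hgauss : ∀ (n : ℕ) (t : Fin n → ℝ), (∀ i, 0 ≤ t i) → ∀ c : Fin n → ℝ,
      Measure.map (fun ω => ∑ i, c i * X ω (t i)) P =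
        gaussianReal 0 (∑ i, ∑ j, c i * c j * fbmCov h (t i) (t j)).toNNReal) :
    ∀ᵐ ω ∂P,
      (∃ C T : ℝ, ∀ t ≥ T, |X ω (t + 1) - X ω t| ≤ C * Real.sqrt (Real.log t)) ∧
      (∃ C T : ℝ, ∀ t ≥ T,
        |X ω t - ∫ s in t..(t + 1), X ω s| ≤ C * Real.sqrt (Real.log t)) :=
  stmt6_general P h hh X hmeas hcont hgauss
end

section
/- Let p : [0,∞) → ℝ be continuous with p ≥ 0, q, r : [0,∞) → ℝ continuous with |r(t)| ≤ ε√(C₁ + p(t)) for all t, where εc < 1 for a constant c > 0. Define for u in L the quadratic form E(u) = ∫₀^∞ |u'|² dt + ∫₀^∞ (p + q)|u|² dt − c∫₀^∞ r(t)·2u(t)u'(t) dt. If moreover there are δ ∈ (0, 1−εc) and C₂ ≥ 0 with (1−εc−δ)p(t) + q(t) ≥ −C₂ for all t, then with C = εcC₁ + C₂ we have E(u) ≥ (1−εc)∫₀^∞|u'|² dt + δ∫₀^∞ p|u|² dt − C∫₀^∞ |u|² dt ≥ −C‖u‖²_{L²} for every u ∈ L. -/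
open MeasureTheory Set

/-- Membership in the form domain `L`. -/
def MemL (p u u' : ℝ → ℝ) : Prop :=
  LocallyIntegrableOn u' (Ici 0) ∧
  (∀ t ≥ (0:ℝ), u t = ∫ s in (0:ℝ)..t, u' s) ∧
  IntegrableOn (fun t => u' t ^ 2) (Ioi 0) ∧
  IntegrableOn (fun t => (1 + p t) * u t ^ 2) (Ioi 0)

/-- lower bound for the quadratic form
`E(u) = ∫|u'|² + ∫(p+q)|u|² − c∫ r·2uu'`:
`E(u) ≥ (1−εc)∫|u'|² + δ∫p|u|² − C∫|u|² ≥ −C‖u‖²` with `C = εcC₁ + C₂`. -/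
theorem stmt8 (p q r : ℝ → ℝ) (hp : Continuous p) (hp0 : ∀ t, 0 ≤ p t)
    (hq : Continuous q) (hr : Continuous r)
    (C₁ C₂ ε c δ : ℝ) (hC₁ : 0 < C₁) (hε : 0 < ε) (hc : 0 < c)
    (hεc : ε * c < 1) (hδ : δ ∈ Ioo (0:ℝ) (1 - ε * c)) (hC₂ : 0 ≤ C₂)
    (hrb : ∀ t ≥ (0:ℝ), |r t| ≤ ε * Real.sqrt (C₁ + p t))
    (hlow : ∀ t ≥ (0:ℝ), (1 - ε * c - δ) * p t + q t ≥ -C₂)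
    (u u' : ℝ → ℝ) (hu : MemL p u u')
    (hq_int : IntegrableOn (fun t => (p t + q t) * u t ^ 2) (Ioi 0))
    (hr_int : IntegrableOn (fun t => r t * (2 * u t * u' t)) (Ioi 0)) :
    ((∫ t in Ioi (0:ℝ), u' t ^ 2) + (∫ t in Ioi (0:ℝ), (p t + q t) * u t ^ 2)
        - c * ∫ t in Ioi (0:ℝ), r t * (2 * u t * u' t))
      ≥ (1 - ε * c) * (∫ t in Ioi (0:ℝ), u' t ^ 2)
        + δ * (∫ t in Ioi (0:ℝ), p t * u t ^ 2)
        - (ε * c * C₁ + C₂) * ∫ t in Ioi (0:ℝ), u t ^ 2 ∧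
    ((1 - ε * c) * (∫ t in Ioi (0:ℝ), u' t ^ 2)
        + δ * (∫ t in Ioi (0:ℝ), p t * u t ^ 2)
        - (ε * c * C₁ + C₂) * ∫ t in Ioi (0:ℝ), u t ^ 2)
      ≥ -(ε * c * C₁ + C₂) * ∫ t in Ioi (0:ℝ), u t ^ 2 := by
  obtain ⟨hu'loc, hurep, hu'2, h1pu2⟩ := hu
  -- positivity of 1 + p
  have h1p_pos : ∀ t, (0:ℝ) < 1 + p t := fun t => by have := hp0 t; linarith
  -- measurability of u^2 on the restricted measure
  have h1pm : AEStronglyMeasurable (fun t => (1 + p t) * u t ^ 2)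
      (volume.restrict (Ioi (0:ℝ))) := h1pu2.aestronglyMeasurable
  have hinv : Continuous (fun t => (1 + p t)⁻¹) :=
    (continuous_const.add hp).inv₀ fun t => (h1p_pos t).ne'
  have hu2m : AEStronglyMeasurable (fun t => u t ^ 2)
      (volume.restrict (Ioi (0:ℝ))) := by
    have : (fun t => u t ^ 2) =
        fun t => ((1 + p t) * u t ^ 2) * (1 + p t)⁻¹ := by
      funext t
      rw [mul_comm (1 + p t), mul_assoc, mul_inv_cancel₀ (h1p_pos t).ne', mul_one]
    rw [this]
    exact h1pm.mul hinv.aestronglyMeasurable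
  -- integrability of u^2
  have hu2 : IntegrableOn (fun t => u t ^ 2) (Ioi (0:ℝ)) := by
    refine Integrable.mono' h1pu2 hu2m ?_
    filter_upwards with t
    have h1 := hp0 t
    have h2 := sq_nonneg (u t)
    rw [Real.norm_eq_abs, abs_of_nonneg h2]
    nlinarith
  -- integrability of p * u^2
  have hpu2 : IntegrableOn (fun t => p t * u t ^ 2) (Ioi (0:ℝ)) := by
    refine Integrable.mono' h1pu2 (hp.aestronglyMeasurable.mul hu2m) ?_
    filter_upwards with t
    have h1 := hp0 t
    have h2 := sq_nonneg (u t)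
    rw [Real.norm_eq_abs, abs_of_nonneg (mul_nonneg h1 h2)]
    nlinarith
  set I1 := ∫ t in Ioi (0:ℝ), u' t ^ 2 with hI1
  set I2 := ∫ t in Ioi (0:ℝ), (p t + q t) * u t ^ 2 with hI2
  set I3 := ∫ t in Ioi (0:ℝ), r t * (2 * u t * u' t) with hI3
  set Ip := ∫ t in Ioi (0:ℝ), p t * u t ^ 2 with hIp
  set Iu := ∫ t in Ioi (0:ℝ), u t ^ 2 with hIu
  have hI1nn : 0 ≤ I1 := setIntegral_nonneg measurableSet_Ioi fun t _ => sq_nonneg _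
  have hIpnn : 0 ≤ Ip := setIntegral_nonneg measurableSet_Ioi
    fun t _ => mul_nonneg (hp0 t) (sq_nonneg _)
  have hIunn : 0 ≤ Iu := setIntegral_nonneg measurableSet_Ioi fun t _ => sq_nonneg _
  -- (A): I3 ≤ ε * (I1 + C₁ * Iu + Ip)
  have hrhs_int : IntegrableOn
      (fun t => ε * (u' t ^ 2 + (C₁ * u t ^ 2 + p t * u t ^ 2))) (Ioi (0:ℝ)) :=
    ((hu'2.add ((hu2.const_mul C₁).add hpu2)).const_mul ε)
  have hA : I3 ≤ ε * (I1 + (C₁ * Iu + Ip)) := by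
    have hmono : I3 ≤ ∫ t in Ioi (0:ℝ),
        ε * (u' t ^ 2 + (C₁ * u t ^ 2 + p t * u t ^ 2)) := by
      refine setIntegral_mono_on hr_int hrhs_int measurableSet_Ioi ?_
      intro t ht
      have ht0 : (0:ℝ) ≤ t := le_of_lt ht
      set s := Real.sqrt (C₁ + p t) with hs
      have hs0 : 0 ≤ s := Real.sqrt_nonneg _
      have hs2 : s ^ 2 = C₁ + p t := Real.sq_sqrt (by have := hp0 t; linarith)
      have hrb' := hrb t ht0
      have step1 : r t * (2 * u t * u' t) ≤ |r t| * (2 * |u t| * |u' t|) := by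
        calc r t * (2 * u t * u' t) ≤ |r t * (2 * u t * u' t)| := le_abs_self _
        _ = |r t| * (2 * |u t| * |u' t|) := by
            rw [abs_mul, abs_mul, abs_mul]
            simp [abs_two]
      have step2 : |r t| * (2 * |u t| * |u' t|) ≤ ε * s * (2 * |u t| * |u' t|) := by
        apply mul_le_mul_of_nonneg_right hrb'
        positivity
      have step3 : ε * s * (2 * |u t| * |u' t|) ≤
          ε * (u' t ^ 2 + (C₁ * u t ^ 2 + p t * u t ^ 2)) := by
        have key : 2 * (s * |u t|) * |u' t| ≤ (s * |u t|) ^ 2 + |u' t| ^ 2 :=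
          two_mul_le_add_sq _ _
        have h1 : (s * |u t|) ^ 2 = (C₁ + p t) * u t ^ 2 := by
          rw [mul_pow, hs2, sq_abs]
        have h2 : |u' t| ^ 2 = u' t ^ 2 := sq_abs _
        nlinarith [hε.le, key]
      linarith
    have hadd : IntegrableOn (fun t => C₁ * u t ^ 2 + p t * u t ^ 2) (Ioi (0:ℝ)) :=
      (hu2.const_mul C₁).add hpu2
    have heq : ∫ t in Ioi (0:ℝ),
        ε * (u' t ^ 2 + (C₁ * u t ^ 2 + p t * u t ^ 2)) =
        ε * (I1 + (C₁ * Iu + Ip)) := by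
      rw [integral_const_mul, integral_add hu'2 hadd,
        integral_add (hu2.const_mul C₁) hpu2, integral_const_mul]
    linarith [hmono.trans_eq heq]
  -- (B): I2 ≥ (ε*c + δ) * Ip - C₂ * Iu
  have hB : I2 - (ε * c + δ) * Ip + C₂ * Iu ≥ 0 := by
    have heq : I2 - (ε * c + δ) * Ip + C₂ * Iu =
        ∫ t in Ioi (0:ℝ), ((p t + q t) * u t ^ 2
          - (ε * c + δ) * (p t * u t ^ 2) + C₂ * u t ^ 2) := by
      have hsub : IntegrableOn (fun t => (p t + q t) * u t ^ 2
          - (ε * c + δ) * (p t * u t ^ 2)) (Ioi (0:ℝ)) :=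
        hq_int.sub (hpu2.const_mul (ε * c + δ))
      rw [integral_add hsub (hu2.const_mul C₂),
        integral_sub hq_int (hpu2.const_mul (ε * c + δ)),
        integral_const_mul, integral_const_mul]
    rw [heq]
    refine setIntegral_nonneg measurableSet_Ioi fun t ht => ?_
    have hl := hlow t (le_of_lt ht)
    have hcoef : 0 ≤ (1 - ε * c - δ) * p t + q t + C₂ := by linarith
    have : (p t + q t) * u t ^ 2 - (ε * c + δ) * (p t * u t ^ 2) + C₂ * u t ^ 2 =
        ((1 - ε * c - δ) * p t + q t + C₂) * u t ^ 2 := by ring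
    rw [this]
    exact mul_nonneg hcoef (sq_nonneg _)
  have hcI3 : c * I3 ≤ ε * c * I1 + ε * c * C₁ * Iu + ε * c * Ip := by
    have := mul_le_mul_of_nonneg_left hA hc.le
    nlinarith
  constructor
  · nlinarith
  · have h1 : 0 ≤ (1 - ε * c) * I1 := mul_nonneg (by linarith) hI1nn
    have h2 : 0 ≤ δ * Ip := mul_nonneg hδ.1.le hIpnn
    linarith
end

section
/- Let p : [0,∞) → ℝ be continuous, p ≥ 0, with liminf_{t→∞} p(t)/t^α > 0 for some α > 0. Let (u_n) be a sequence of absolutely continuous functions on [0,∞) with u_n(0)=0 and constants M₁, M₂, M₃ such that ∫₀^∞|u_n|² ≤ M₁, ∫₀^∞|u_n'|² ≤ M₂, ∫₀^∞ p|u_n|² ≤ M₃ for all n. Then (u_n) has a subsequence converging in L²([0,∞)). -/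
/-!
Extend `u n` to `ℝ` by `t ↦ u n (max t 0)`. Since `u n t - u n s = ∫ₛᵗ u' n`, the inequality
`|y| ≤ (c y² + 1/c) / 2` and the bound `M₂` make these extensions uniformly equicontinuous and
bounded on compact sets. A diagonal argument on a countable dense set then gives a subsequence
that converges pointwise to some `v`. Because `p t ≥ c t ^ α → ∞`, the weighted bound `M₃` gives
`∫_X^∞ |u n|² ≤ M₃ / inf_{t ≥ X} p t`, which is small uniformly in `n`. On `(0, X]` we apply
bounded convergence, and Fatou's lemma bounds the tail of `v`.
-/

open MeasureTheory Set Filter Topology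

theorem tendsto_atTop_of_liminf_div_rpow_pos {p : ℝ → ℝ} {α : ℝ} (hp0 : ∀ᶠ t in atTop, 0 ≤ p t)
    (hα : 0 < α) (h : 0 < liminf (fun t => p t / t ^ α) atTop) : Tendsto p atTop atTop := by
  have hbdd : IsBoundedUnder (· ≥ ·) atTop fun t => p t / t ^ α :=
    isBoundedUnder_of_eventually_ge <| by
      filter_upwards [hp0, eventually_ge_atTop 0] with t ht ht0
      exact div_nonneg ht (Real.rpow_nonneg ht0 α)
  refine tendsto_atTop_mono' atTop ?_ ((tendsto_rpow_atTop hα).const_mul_atTop (half_pos h))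
  filter_upwards [eventually_lt_of_lt_liminf (half_lt_self h) hbdd, eventually_gt_atTop 0]
    with t ht ht0
  exact ((lt_div_iff₀ (Real.rpow_pos_of_pos ht0 α)).1 ht).le

theorem eventually_forall_setIntegral_Ioi_le {ι : Type*} {p : ℝ → ℝ} {f : ι → ℝ → ℝ}
    {a M ε : ℝ} (hp : Tendsto p atTop atTop) (hp0 : ∀ t > a, 0 ≤ p t)
    (hf0 : ∀ i, ∀ t > a, 0 ≤ f i t) (hf : ∀ i, IntegrableOn (f i) (Ioi a))
    (hpf : ∀ i, IntegrableOn (fun t => p t * f i t) (Ioi a))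
    (hM : ∀ i, ∫ t in Ioi a, p t * f i t ≤ M) (hε : 0 < ε) :
    ∀ᶠ X in atTop, ∀ i, ∫ t in Ioi X, f i t ≤ ε := by
  set C := |M| / ε + 1
  have hC : 0 < C := by positivity
  have hMC : M ≤ C * ε := by
    rw [add_mul, div_mul_cancel₀ _ hε.ne', one_mul]
    linarith [le_abs_self M]
  obtain ⟨X₀, hX₀⟩ := eventually_atTop.1 (hp.eventually_ge_atTop C)
  filter_upwards [eventually_ge_atTop (max X₀ a)] with X hX i
  have hXa : Ioi X ⊆ Ioi a := Ioi_subset_Ioi (le_of_max_le_right hX)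
  refine le_of_mul_le_mul_left ?_ hC
  calc C * ∫ t in Ioi X, f i t
      = ∫ t in Ioi X, C * f i t := (integral_const_mul C _).symm
    _ ≤ ∫ t in Ioi X, p t * f i t := by
      refine setIntegral_mono_on (((hf i).mono_set hXa).const_mul C)
        ((hpf i).mono_set hXa) measurableSet_Ioi fun t ht => ?_
      exact mul_le_mul_of_nonneg_right (hX₀ t ((le_of_max_le_left hX).trans ht.le))
        (hf0 i t (hXa ht))
    _ ≤ ∫ t in Ioi a, p t * f i t :=
      setIntegral_mono_set (hpf i)
        ((ae_restrict_iff' measurableSet_Ioi).2 (.of_forall fun t ht =>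
          mul_nonneg (hp0 t ht) (hf0 i t ht)))
        hXa.eventuallyLE
    _ ≤ C * ε := (hM i).trans hMC

theorem abs_intervalIntegral_le_of_sq {f : ℝ → ℝ} {a b c : ℝ} (hab : a ≤ b) (hc : 0 < c)
    (hf : IntervalIntegrable f volume a b)
    (hf2 : IntervalIntegrable (fun x => f x ^ 2) volume a b) :
    |∫ x in a..b, f x| ≤ (c * (∫ x in a..b, f x ^ 2) + (b - a) / c) / 2 := by
  have hamgm (y : ℝ) : |y| ≤ (c * y ^ 2 + 1 / c) / 2 := by
    have : 0 ≤ (c * |y| - 1) ^ 2 / c := by positivity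
    rw [← sq_abs y]
    field_simp at this ⊢
    nlinarith
  calc |∫ x in a..b, f x| ≤ ∫ x in a..b, |f x| :=
        intervalIntegral.abs_integral_le_integral_abs hab
    _ ≤ ∫ x in a..b, (c * f x ^ 2 + 1 / c) / 2 :=
        intervalIntegral.integral_mono_on hab hf.abs
          (((hf2.const_mul c).add intervalIntegrable_const).div_const 2) fun x _ => hamgm (f x)
    _ = (c * (∫ x in a..b, f x ^ 2) + (b - a) / c) / 2 := by
        rw [intervalIntegral.integral_div, intervalIntegral.integral_add (hf2.const_mul c)
          intervalIntegrable_const, intervalIntegral.integral_const_mul,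
          intervalIntegral.integral_const, smul_eq_mul, mul_one_div]

theorem abs_sub_le_of_eq_intervalIntegral {u u' : ℝ → ℝ} {a c s t : ℝ}
    (hu' : LocallyIntegrableOn u' (Ici a)) (hu : ∀ t ≥ a, u t = ∫ x in a..t, u' x)
    (hu'2 : IntegrableOn (fun x => u' x ^ 2) (Ioi a)) (hc : 0 < c) (hs : a ≤ s) (hst : s ≤ t) :
    |u t - u s| ≤ (c * (∫ x in Ioi a, u' x ^ 2) + (t - s) / c) / 2 := by
  have hii {x y : ℝ} (hx : a ≤ x) (hxy : x ≤ y) : IntervalIntegrable u' volume x y :=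
    (intervalIntegrable_iff_integrableOn_Icc_of_le hxy).2 <|
      hu'.integrableOn_compact_subset (Icc_subset_Ici_iff hxy |>.2 hx) isCompact_Icc
  have hIoc : Ioc s t ⊆ Ioi a := fun x hx => hs.trans_lt hx.1
  have hsq : IntervalIntegrable (fun x => u' x ^ 2) volume s t :=
    (intervalIntegrable_iff_integrableOn_Ioc_of_le hst).2 (hu'2.mono_set hIoc)
  rw [hu t (hs.trans hst), hu s hs,
    intervalIntegral.integral_interval_sub_left (hii le_rfl (hs.trans hst)) (hii le_rfl hs)]
  refine (abs_intervalIntegral_le_of_sq hst hc (hii hs hst) hsq).trans ?_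
  gcongr
  rw [intervalIntegral.integral_of_le hst]
  exact setIntegral_mono_set hu'2 (.of_forall fun x => sq_nonneg _) hIoc.eventuallyLE

theorem uniformEquicontinuous_comp_max_of_abs_sub_le {ι : Type*} {F : ι → ℝ → ℝ} {M : ℝ}
    (hF : ∀ i, ∀ c > 0, ∀ s t, 0 ≤ s → s ≤ t → |F i t - F i s| ≤ (c * M + (t - s) / c) / 2) :
    UniformEquicontinuous fun i t => F i (max t 0) := by
  rw [Metric.uniformEquicontinuous_iff]
  intro ε hε
  set c := ε / (|M| + 1)
  have hc : 0 < c := by positivity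
  have hcM : c * M < ε := by
    calc c * M ≤ c * |M| := by gcongr; exact le_abs_self M
      _ < c * (|M| + 1) := by gcongr; linarith
      _ = ε := div_mul_cancel₀ _ (by positivity)
  have hmono {s t : ℝ} (hs : 0 ≤ s) (hst : s ≤ t) (hts : t - s < ε * c) (i : ι) :
      dist (F i t) (F i s) < ε := by
    rw [Real.dist_eq]
    refine (hF i c hc s t hs hst).trans_lt ?_
    have : (t - s) / c < ε := (div_lt_iff₀ hc).2 hts
    linarith
  refine ⟨ε * c, by positivity, fun x y hxy i => ?_⟩
  have hmax : dist (max x 0) (max y 0) < ε * c :=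
    (abs_max_sub_max_le_abs x y 0).trans_lt hxy
  rcases le_total (max x 0) (max y 0) with h | h
  · rw [dist_comm] at hmax ⊢
    exact hmono (le_max_right x 0) h ((le_abs_self _).trans_lt hmax) i
  · exact hmono (le_max_right y 0) h ((le_abs_self _).trans_lt hmax) i

theorem EquicontinuousAt.cauchySeq_of_mem_closure {ι X α : Type*} [SemilatticeSup ι]
    [Nonempty ι] [TopologicalSpace X] [UniformSpace α] {F : ι → X → α} {s : Set X} {x : X}
    (hF : EquicontinuousAt F x)
    (hs : ∀ y ∈ s, CauchySeq fun n => F n y) (hx : x ∈ closure s) :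
    CauchySeq fun n => F n x := by
  rw [cauchySeq_iff_tendsto]
  intro U hU
  rw [mem_map]
  obtain ⟨V, hV, _, hVU⟩ := comp_comp_symm_mem_uniformity_sets hU
  obtain ⟨y, hys, hFy⟩ := mem_closure_iff_frequently.1 hx |>.and_eventually (hF V hV) |>.exists
  filter_upwards [mem_map.1 (cauchySeq_iff_tendsto.1 (hs y hys) hV)] with ⟨m, n⟩ hmn
  exact hVU ⟨_, ⟨_, hFy m, hmn⟩, SetRel.symm V (hFy n)⟩

theorem exists_subseq_tendsto_of_equicontinuous {X α : Type*} [TopologicalSpace X]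
    [TopologicalSpace.SeparableSpace X] [PseudoMetricSpace α] [ProperSpace α]
    {F : ℕ → X → α} (hF : Equicontinuous F)
    (hbdd : ∀ x, Bornology.IsBounded (range fun n => F n x)) :
    ∃ φ : ℕ → ℕ, StrictMono φ ∧ ∃ v : X → α,
      ∀ x, Tendsto (fun n => F (φ n) x) atTop (𝓝 (v x)) := by
  obtain ⟨D, hD, hDdense⟩ := TopologicalSpace.exists_countable_dense X
  have := hD.to_subtype
  have hcpt : IsCompact (univ.pi fun d : D => closure (range fun n => F n d)) :=
    isCompact_univ_pi fun d => (hbdd d).isCompact_closure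
  obtain ⟨_, -, φ, hφ, hconv⟩ := hcpt.tendsto_subseq (x := fun n (d : D) => F n d)
    fun n => mem_univ_pi.2 fun d => subset_closure ⟨n, rfl⟩
  have hcauchy (x : X) : CauchySeq fun n => F (φ n) x :=
    ((hF x).comp φ).cauchySeq_of_mem_closure
      (fun y hy => (tendsto_pi_nhds.1 hconv ⟨y, hy⟩).cauchySeq) (hDdense x)
  choose v hv using fun x => cauchySeq_tendsto_of_complete (hcauchy x)
  exact ⟨φ, hφ, v, hv⟩

section

variable {α : Type*} [MeasurableSpace α] {μ : Measure α}

theorem integrable_and_integral_le_of_tendsto {F : ℕ → α → ℝ} {f : α → ℝ} {C : ℝ}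
    (hF : ∀ n, Integrable (F n) μ) (hF0 : ∀ n, 0 ≤ᵐ[μ] F n) (hFC : ∀ n, ∫ x, F n x ∂μ ≤ C)
    (hlim : ∀ᵐ x ∂μ, Tendsto (fun n => F n x) atTop (𝓝 (f x))) :
    Integrable f μ ∧ ∫ x, f x ∂μ ≤ C := by
  have hf0 : 0 ≤ᵐ[μ] f := by
    filter_upwards [hlim, ae_all_iff.2 hF0] with x hx hx0
    exact ge_of_tendsto' hx hx0
  have hfm : AEStronglyMeasurable f μ :=
    aestronglyMeasurable_of_tendsto_ae _ (fun n => (hF n).1) hlim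
  have hlin : ∫⁻ x, ENNReal.ofReal (f x) ∂μ ≤ ENNReal.ofReal C := calc
    ∫⁻ x, ENNReal.ofReal (f x) ∂μ
        = ∫⁻ x, liminf (fun n => ENNReal.ofReal (F n x)) atTop ∂μ := by
      refine lintegral_congr_ae ?_
      filter_upwards [hlim] with x hx
      exact ((ENNReal.continuous_ofReal.tendsto _).comp hx).liminf_eq.symm
    _ ≤ liminf (fun n => ∫⁻ x, ENNReal.ofReal (F n x) ∂μ) atTop :=
      lintegral_liminf_le' fun n => (hF n).1.aemeasurable.ennreal_ofReal
    _ ≤ ENNReal.ofReal C := by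
      refine liminf_le_of_frequently_le' (.of_forall fun n => ?_)
      rw [← ofReal_integral_eq_lintegral_ofReal (hF n) (hF0 n)]
      exact ENNReal.ofReal_le_ofReal (hFC n)
  have hfi : Integrable f μ :=
    ⟨hfm, (hasFiniteIntegral_iff_ofReal hf0).2 (hlin.trans_lt ENNReal.ofReal_lt_top)⟩
  have hC : 0 ≤ C := (integral_nonneg_of_ae (hF0 0)).trans (hFC 0)
  refine ⟨hfi, ?_⟩
  rw [← ENNReal.ofReal_le_ofReal_iff hC, ofReal_integral_eq_lintegral_ofReal hfi hf0]
  exact hlin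

theorem integral_sq_sub_le {f g : α → ℝ} (hf : MemLp f 2 μ) (hg : MemLp g 2 μ) :
    ∫ x, (f x - g x) ^ 2 ∂μ ≤ 2 * ∫ x, f x ^ 2 ∂μ + 2 * ∫ x, g x ^ 2 ∂μ := by
  rw [← integral_const_mul, ← integral_const_mul,
    ← integral_add (hf.integrable_sq.const_mul 2) (hg.integrable_sq.const_mul 2)]
  refine integral_mono (hf.sub hg).integrable_sq
    ((hf.integrable_sq.const_mul 2).add (hg.integrable_sq.const_mul 2)) fun x => ?_
  nlinarith [sq_nonneg (f x + g x)]

theorem tendsto_integral_sq_sub_of_bounded [IsFiniteMeasure μ] {g : ℕ → α → ℝ} {v : α → ℝ}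
    {B : ℝ} (hg : ∀ n, AEStronglyMeasurable (g n) μ) (hB : ∀ n, ∀ᵐ x ∂μ, |g n x| ≤ B)
    (hlim : ∀ᵐ x ∂μ, Tendsto (fun n => g n x) atTop (𝓝 (v x))) :
    Tendsto (fun n => ∫ x, (g n x - v x) ^ 2 ∂μ) atTop (𝓝 0) := by
  have hvB : ∀ᵐ x ∂μ, |v x| ≤ B := by
    filter_upwards [hlim, ae_all_iff.2 hB] with x hx hxB
    exact le_of_tendsto' hx.abs hxB
  have hv : AEStronglyMeasurable v μ := aestronglyMeasurable_of_tendsto_ae _ hg hlim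
  have := tendsto_integral_filter_of_norm_le_const (μ := μ) (l := atTop)
    (F := fun n x => (g n x - v x) ^ 2) (f := fun _ => 0)
    (.of_forall fun n => ((hg n).sub hv).pow 2) ⟨(B + B) ^ 2, .of_forall fun n => ?_⟩ ?_
  · simpa using this
  · filter_upwards [hB n, hvB] with x hgx hvx
    rw [Real.norm_eq_abs, abs_pow]
    gcongr
    exact (abs_sub _ _).trans (add_le_add hgx hvx)
  · filter_upwards [hlim] with x hx
    simpa using (hx.sub_const (v x)).pow 2

theorem memLp_two_and_tendsto_integral_sq_sub {g : ℕ → α → ℝ} {v : α → ℝ}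
    (hg : ∀ n, MemLp (g n) 2 μ) (hlim : ∀ᵐ x ∂μ, Tendsto (fun n => g n x) atTop (𝓝 (v x)))
    (htight : ∀ ε > 0, ∃ K, MeasurableSet K ∧ μ K ≠ ⊤ ∧
      (∃ B, ∀ n, ∀ᵐ x ∂μ, x ∈ K → |g n x| ≤ B) ∧ ∀ n, ∫ x in Kᶜ, g n x ^ 2 ∂μ ≤ ε) :
    MemLp v 2 μ ∧ Tendsto (fun n => ∫ x, (g n x - v x) ^ 2 ∂μ) atTop (𝓝 0) := by
  have hv_meas : AEStronglyMeasurable v μ :=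
    aestronglyMeasurable_of_tendsto_ae _ (fun n => (hg n).1) hlim
  have hv_tail {K : Set α} {ε : ℝ} (hK : ∀ n, ∫ x in Kᶜ, g n x ^ 2 ∂μ ≤ ε) :
      IntegrableOn (fun x => v x ^ 2) Kᶜ μ ∧ ∫ x in Kᶜ, v x ^ 2 ∂μ ≤ ε :=
    integrable_and_integral_le_of_tendsto (fun n => (hg n).integrable_sq.integrableOn)
      (fun n => ae_restrict_of_ae (.of_forall fun x => sq_nonneg _)) hK
      (ae_restrict_of_ae (hlim.mono fun x hx => hx.pow 2))
  have hv : MemLp v 2 μ := by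
    obtain ⟨K, hK, hμK, ⟨B, hB⟩, hK1⟩ := htight 1 one_pos
    have hvK : IntegrableOn (fun x => v x ^ 2) K μ := by
      refine Measure.integrableOn_of_bounded hμK (hv_meas.pow 2) (M := B ^ 2) ?_
      rw [ae_restrict_iff' hK]
      filter_upwards [hlim, ae_all_iff.2 hB] with x hx hxB hxK
      rw [Real.norm_eq_abs, abs_pow]
      exact pow_le_pow_left₀ (abs_nonneg _) (le_of_tendsto' hx.abs fun n => hxB n hxK) 2
    refine (memLp_two_iff_integrable_sq hv_meas).2 (integrableOn_univ.1 ?_)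
    rw [← union_compl_self K]
    exact hvK.union (hv_tail hK1).1
  refine ⟨hv, tendsto_order.2 ⟨fun a ha => .of_forall fun n =>
    ha.trans_le (integral_nonneg fun x => sq_nonneg _), fun a ha => ?_⟩⟩
  obtain ⟨K, hK, hμK, ⟨B, hB⟩, hKε⟩ := htight (a / 8) (by positivity)
  have : IsFiniteMeasure (μ.restrict K) := isFiniteMeasure_restrict.2 hμK
  have hinner : Tendsto (fun n => ∫ x in K, (g n x - v x) ^ 2 ∂μ) atTop (𝓝 0) :=
    tendsto_integral_sq_sub_of_bounded (fun n => (hg n).1.restrict)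
      (fun n => (ae_restrict_iff' hK).2 (hB n)) (ae_restrict_of_ae hlim)
  filter_upwards [hinner.eventually_lt_const (half_pos ha)] with n hn
  have houter : ∫ x in Kᶜ, (g n x - v x) ^ 2 ∂μ ≤ a / 2 := by
    have := integral_sq_sub_le ((hg n).restrict Kᶜ) (hv.restrict Kᶜ)
    linarith [hKε n, (hv_tail hKε).2]
  have hint : Integrable (fun x => (g n x - v x) ^ 2) μ := ((hg n).sub hv).integrable_sq
  rw [← integral_add_compl hK hint]
  linarith

end

theorem tendsto_setIntegral_Ioi_sq_sub {g : ℕ → ℝ → ℝ} {v : ℝ → ℝ} {a : ℝ}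
    (hg_meas : ∀ n, AEStronglyMeasurable (g n) (volume.restrict (Ioi a)))
    (hg_int : ∀ n, IntegrableOn (fun t => g n t ^ 2) (Ioi a))
    (hlim : ∀ t > a, Tendsto (fun n => g n t) atTop (𝓝 (v t)))
    (hbdd : ∀ X, ∃ B, ∀ n, ∀ t ∈ Ioc a X, |g n t| ≤ B)
    (htail : ∀ ε > 0, ∀ᶠ X in atTop, ∀ n, ∫ t in Ioi X, g n t ^ 2 ≤ ε) :
    IntegrableOn (fun t => v t ^ 2) (Ioi a) ∧
      Tendsto (fun n => ∫ t in Ioi a, (g n t - v t) ^ 2) atTop (𝓝 0) := by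
  have hmem n : MemLp (g n) 2 (volume.restrict (Ioi a)) :=
    (memLp_two_iff_integrable_sq (hg_meas n)).2 (hg_int n)
  refine (memLp_two_and_tendsto_integral_sq_sub hmem
    (ae_restrict_of_forall_mem measurableSet_Ioi hlim) fun ε hε => ?_).imp
    MemLp.integrable_sq id
  obtain ⟨X, hX, hXa⟩ := ((htail ε hε).and (eventually_ge_atTop a)).exists
  obtain ⟨B, hB⟩ := hbdd X
  refine ⟨Iic X, measurableSet_Iic, ?_, ⟨B, fun n => ?_⟩, fun n => ?_⟩
  · rw [Measure.restrict_apply measurableSet_Iic, Iic_inter_Ioi]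
    exact measure_Ioc_lt_top.ne
  · filter_upwards [ae_restrict_mem measurableSet_Ioi] with t hta htX using hB n t ⟨hta, htX⟩
  · rw [Measure.restrict_restrict measurableSet_Iic.compl, compl_Iic, Ioi_inter_Ioi,
      max_eq_left hXa]
    exact hX n

theorem stmt11_general (p : ℝ → ℝ) (hp0 : ∀ t, 0 ≤ p t)
    (α : ℝ) (hα : 0 < α)
    (hliminf : 0 < Filter.liminf (fun t : ℝ => p t / t ^ α) Filter.atTop)
    (M₂ M₃ : ℝ) (u : ℕ → ℝ → ℝ) (u' : ℕ → ℝ → ℝ)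
    (hu' : ∀ n, LocallyIntegrableOn (u' n) (Ici 0))
    (hu : ∀ n, ∀ t ≥ (0:ℝ), u n t = ∫ s in (0:ℝ)..t, u' n s)
    (hint1 : ∀ n, IntegrableOn (fun t => u n t ^ 2) (Ioi 0))
    (hint2 : ∀ n, IntegrableOn (fun t => u' n t ^ 2) (Ioi 0))
    (hb2 : ∀ n, ∫ t in Ioi (0:ℝ), u' n t ^ 2 ≤ M₂)
    (hint3 : ∀ n, IntegrableOn (fun t => p t * u n t ^ 2) (Ioi 0))
    (hb3 : ∀ n, ∫ t in Ioi (0:ℝ), p t * u n t ^ 2 ≤ M₃) :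
    ∃ φ : ℕ → ℕ, StrictMono φ ∧ ∃ v : ℝ → ℝ,
      IntegrableOn (fun t => v t ^ 2) (Ioi 0) ∧
      Tendsto (fun n => ∫ t in Ioi (0:ℝ), (u (φ n) t - v t) ^ 2)
        atTop (nhds 0) := by
  have hmod : ∀ n, ∀ c > 0, ∀ s t, 0 ≤ s → s ≤ t →
      |u n t - u n s| ≤ (c * M₂ + (t - s) / c) / 2 := fun n c hc s t hs hst =>
    (abs_sub_le_of_eq_intervalIntegral (hu' n) (hu n) (hint2 n) hc hs hst).trans
      (by gcongr; exact hb2 n)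
  have hbound : ∀ n, ∀ t ≥ 0, |u n t| ≤ (M₂ + t) / 2 := fun n t ht => by
    simpa [hu n 0 le_rfl] using hmod n 1 one_pos 0 t le_rfl ht
  have hequi := uniformEquicontinuous_comp_max_of_abs_sub_le hmod
  have hcont n : ContinuousOn (u n) (Ici 0) :=
    (hequi.uniformContinuous n).continuous.continuousOn.congr fun t ht => by
      simp [max_eq_left (show (0:ℝ) ≤ t from ht)]
  obtain ⟨φ, hφ, v, hv⟩ := exists_subseq_tendsto_of_equicontinuous hequi.equicontinuous
    fun t => isBounded_iff_forall_norm_le.2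
      ⟨(M₂ + max t 0) / 2, forall_mem_range.2 fun n => hbound n _ (le_max_right t 0)⟩
  have hp_top := tendsto_atTop_of_liminf_div_rpow_pos (.of_forall hp0) hα hliminf
  refine ⟨φ, hφ, v, tendsto_setIntegral_Ioi_sq_sub (g := fun n => u (φ n))
    (fun n => ((hcont _).mono Ioi_subset_Ici_self).aestronglyMeasurable measurableSet_Ioi)
    (fun n => hint1 _) (fun t ht => by simpa [max_eq_left ht.le] using hv t)
    (fun X => ⟨(M₂ + X) / 2, fun n t ht => (hbound _ t ht.1.le).trans (by linarith [ht.2])⟩)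
    fun ε hε => eventually_forall_setIntegral_Ioi_le hp_top (fun t _ => hp0 t)
      (fun n t _ => sq_nonneg _) (fun n => hint1 _) (fun n => hint3 _) (fun n => hb3 _) hε⟩

/-- Let `p ≥ 0` be continuous with `liminf_{t→∞} p(t)/t^α > 0` for some
`α > 0`, and `(u_n)` absolutely continuous with `u_n(0)=0` and uniform bounds
`∫|u_n|² ≤ M₁`, `∫|u_n'|² ≤ M₂`, `∫ p|u_n|² ≤ M₃`. Then `(u_n)` has a subsequence
converging in `L²([0,∞))`. -/
theorem stmt11 (p : ℝ → ℝ) (hp : Continuous p) (hp0 : ∀ t, 0 ≤ p t)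
    (α : ℝ) (hα : 0 < α)
    (hliminf : 0 < Filter.liminf (fun t : ℝ => p t / t ^ α) Filter.atTop)
    (M₁ M₂ M₃ : ℝ) (u : ℕ → ℝ → ℝ) (u' : ℕ → ℝ → ℝ)
    (hu' : ∀ n, LocallyIntegrableOn (u' n) (Ici 0))
    (hu : ∀ n, ∀ t ≥ (0:ℝ), u n t = ∫ s in (0:ℝ)..t, u' n s)
    (hint1 : ∀ n, IntegrableOn (fun t => u n t ^ 2) (Ioi 0))
    (hb1 : ∀ n, ∫ t in Ioi (0:ℝ), u n t ^ 2 ≤ M₁)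
    (hint2 : ∀ n, IntegrableOn (fun t => u' n t ^ 2) (Ioi 0))
    (hb2 : ∀ n, ∫ t in Ioi (0:ℝ), u' n t ^ 2 ≤ M₂)
    (hint3 : ∀ n, IntegrableOn (fun t => p t * u n t ^ 2) (Ioi 0))
    (hb3 : ∀ n, ∫ t in Ioi (0:ℝ), p t * u n t ^ 2 ≤ M₃) :
    ∃ φ : ℕ → ℕ, StrictMono φ ∧ ∃ v : ℝ → ℝ,
      IntegrableOn (fun t => v t ^ 2) (Ioi 0) ∧
      Tendsto (fun n => ∫ t in Ioi (0:ℝ), (u (φ n) t - v t) ^ 2)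
        atTop (nhds 0) :=
  stmt11_general p hp0 α hα hliminf M₂ M₃ u u' hu' hu hint1 hint2 hb2 hint3 hb3
end
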